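/- arXiv:2205.00099 — 7 statements merged into one kernel-verified Lean document; each statement's English description precedes it below -/
import Mathlib

section
/- Let G̃ : ℝ≥0 → ℝ^p satisfy G̃'(t) = -α F(t) φ(t) φ(t)ᵀ G̃(t), where F is invertible and satisfies d/dt[F⁻¹(t)] = -β(t) F⁻¹(t) + α φ(t) φ(t)ᵀ, and let z solve ż(t) = -β(t) z(t), z(0) = 1, with F(0) = (1/f₀) I. Then F⁻¹(t) G̃(t) = z(t) f₀ G̃(0) for all t ≥ 0. -/
/-!
Both `F⁻¹ G̃` and `z` solve the linear equation `y' = -β y` on `t ≥ 0`: in the derivative of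
`F⁻¹ G̃` the two excitation terms `± α φ φᵀ G̃` cancel because `F⁻¹ F = 1`. Solutions of this
equation are `y t = exp (-∫₀ᵗ β) • y 0`, so `F⁻¹ G̃ = z • F⁻¹(0) G̃(0) = z f₀ G̃(0)`.
-/

open Matrix

attribute [local instance] Matrix.normedAddCommGroup Matrix.normedSpace

theorem HasDerivAt.matrix_mulVec {m n : Type*} [Fintype m] [Fintype n]
    {A : ℝ → Matrix m n ℝ} {v : ℝ → n → ℝ} {A' : Matrix m n ℝ} {v' : n → ℝ} {t : ℝ}
    (hA : HasDerivAt A A' t) (hv : HasDerivAt v v' t) :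
    HasDerivAt (fun s => A s *ᵥ v s) (A' *ᵥ v t + A t *ᵥ v') t := by
  let L : Matrix m n ℝ →L[ℝ] (n → ℝ) →L[ℝ] (m → ℝ) :=
    (LinearMap.toContinuousLinearMap.toLinearMap ∘ₗ mulVecBilin ℝ ℝ).toContinuousLinearMap
  exact (L.hasFDerivAt.comp_hasDerivAt t hA).clm_apply hv

theorem eq_exp_integral_smul_of_hasDerivAt {E : Type*} [NormedAddCommGroup E] [NormedSpace ℝ E]
    {u : ℝ → E} {β : ℝ → ℝ} (hβ : Continuous β)
    (hu : ∀ t, 0 ≤ t → HasDerivAt u (β t • u t) t) :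
    ∀ t, 0 ≤ t → u t = Real.exp (∫ s in (0 : ℝ)..t, β s) • u 0 := by
  set B : ℝ → ℝ := fun t => ∫ s in (0 : ℝ)..t, β s
  have hB : ∀ t, HasDerivAt B (β t) t := fun t =>
    (hβ.integral_hasStrictDerivAt 0 t).hasDerivAt
  have hv : ∀ t, 0 ≤ t → HasDerivAt (fun s => Real.exp (-B s) • u s) 0 t := by
    intro t ht
    refine (((hB t).neg.exp).smul (hu t ht)).congr_deriv ?_
    rw [smul_smul, ← add_smul, mul_neg, mul_comm, add_neg_cancel, zero_smul]
  intro t ht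
  have hconst := constant_of_has_deriv_right_zero (a := 0) (b := t)
    (fun x hx => (hv x hx.1).continuousAt.continuousWithinAt)
    (fun x hx => (hv x hx.1).hasDerivWithinAt) t ⟨ht, le_rfl⟩
  simp only [B, intervalIntegral.integral_same, neg_zero, Real.exp_zero, one_smul] at hconst
  rw [← hconst, smul_smul, ← Real.exp_add, add_neg_cancel, Real.exp_zero, one_smul]

theorem stmt2_general {p : ℕ} (F : ℝ → Matrix (Fin p) (Fin p) ℝ)
    (Gt : ℝ → Fin p → ℝ) (z : ℝ → ℝ) (φ : ℝ → Fin p → ℝ) (β : ℝ → ℝ)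
    (α f₀ : ℝ) (hf₀ : 0 < f₀)
    (hβ : Continuous β)
    (hinv : ∀ t, 0 ≤ t → IsUnit (F t))
    (hG : ∀ t, 0 ≤ t → HasDerivAt Gt
      (-α • (F t).mulVec ((vecMulVec (φ t) (φ t)).mulVec (Gt t))) t)
    (hFinv : ∀ t, 0 ≤ t → HasDerivAt (fun s => (F s)⁻¹)
      (-(β t) • (F t)⁻¹ + α • vecMulVec (φ t) (φ t)) t)
    (hz : ∀ t, 0 ≤ t → HasDerivAt z (-(β t) * z t) t)
    (hz0 : z 0 = 1)
    (hF0 : F 0 = f₀⁻¹ • (1 : Matrix (Fin p) (Fin p) ℝ)) :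
    ∀ t, 0 ≤ t → (F t)⁻¹.mulVec (Gt t) = (z t * f₀) • Gt 0 := by
  have hF0inv : (F 0)⁻¹ = f₀ • (1 : Matrix (Fin p) (Fin p) ℝ) := by
    refine inv_eq_right_inv ?_
    rw [hF0, smul_mul_smul_comm, one_mul, inv_mul_cancel₀ hf₀.ne', one_smul]
  have hy : ∀ t, 0 ≤ t → HasDerivAt (fun s => (F s)⁻¹ *ᵥ Gt s) (-(β t) • ((F t)⁻¹ *ᵥ Gt t)) t := by
    intro t ht
    refine ((hFinv t ht).matrix_mulVec (hG t ht)).congr_deriv ?_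
    rw [mulVec_smul, mulVec_mulVec, nonsing_inv_mul _ ((isUnit_iff_isUnit_det _).mp (hinv t ht)),
      one_mulVec, add_mulVec, smul_mulVec, smul_mulVec, add_assoc, ← add_smul, add_neg_cancel,
      zero_smul, add_zero]
  intro t ht
  rw [eq_exp_integral_smul_of_hasDerivAt hβ.neg hy t ht,
    eq_exp_integral_smul_of_hasDerivAt (u := z) hβ.neg hz t ht, hz0, hF0inv]
  simp [smul_mulVec, smul_smul]

/-- key structural property of the CT least-squares estimator:
`F⁻¹(t) G̃(t) = z(t) f₀ G̃(0)`. -/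
theorem stmt2 {p : ℕ} (F : ℝ → Matrix (Fin p) (Fin p) ℝ)
    (Gt : ℝ → Fin p → ℝ) (z : ℝ → ℝ) (φ : ℝ → Fin p → ℝ) (β : ℝ → ℝ)
    (α f₀ : ℝ) (hα : 0 < α) (hf₀ : 0 < f₀)
    (hφ : Continuous φ) (hβ : Continuous β)
    (hinv : ∀ t, 0 ≤ t → IsUnit (F t))
    (hG : ∀ t, 0 ≤ t → HasDerivAt Gt
      (-α • (F t).mulVec ((vecMulVec (φ t) (φ t)).mulVec (Gt t))) t)
    (hFinv : ∀ t, 0 ≤ t → HasDerivAt (fun s => (F s)⁻¹)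
      (-(β t) • (F t)⁻¹ + α • vecMulVec (φ t) (φ t)) t)
    (hz : ∀ t, 0 ≤ t → HasDerivAt z (-(β t) * z t) t)
    (hz0 : z 0 = 1)
    (hF0 : F 0 = f₀⁻¹ • (1 : Matrix (Fin p) (Fin p) ℝ)) :
    ∀ t, 0 ≤ t → (F t)⁻¹.mulVec (Gt t) = (z t * f₀) • Gt 0 :=
  stmt2_general F Gt z φ β α f₀ hf₀ hβ hinv hG hFinv hz hz0 hF0
end

section
/- Suppose Δ : ℝ≥0 → ℝ is continuous and persistently exciting, i.e. there exist T, δ > 0 with ∫_t^{t+T} Δ²(s) ds ≥ δ for all t ≥ 0, and suppose V : ℝ≥0 → ℝ≥0 is differentiable with V̇(t) ≤ -c Δ²(t) V(t) for a constant c > 0. Then V(t) → 0 exponentially: there exist K, λ > 0 such that V(t) ≤ K e^{-λ t} V(0) for all t ≥ 0. -/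
/-!
Along a solution of `V̇ ≤ -a V` the product `V · exp (∫₀ᵗ a)` is nonincreasing, so
`V t ≤ exp (-∫₀ᵗ a) V 0`. With `a = c Δ²`, persistent excitation makes `∫₀ᵗ Δ²` grow at least
linearly: `[0, t]` contains `⌊t / T⌋` disjoint windows of length `T`, each contributing `δ`, so
`∫₀ᵗ Δ² ≥ δ t / T - δ`, which gives the exponential rate `c δ / T` with constant `exp (c δ)`.
-/

open Real MeasureTheory intervalIntegral

section PersistentExcitation

variable {f : ℝ → ℝ} {T δ : ℝ}

theorem nat_mul_le_integral_of_le_integral_add (hf : LocallyIntegrable f) (hT : 0 ≤ T)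
    (hPE : ∀ t, 0 ≤ t → δ ≤ ∫ s in t..(t + T), f s) (n : ℕ) :
    n * δ ≤ ∫ s in (0 : ℝ)..(n * T), f s := by
  have hfi : ∀ a b, IntervalIntegrable f volume a b := fun a b =>
    (hf.integrableOn_isCompact isCompact_uIcc).intervalIntegrable
  induction n with
  | zero => simp
  | succ n ih =>
    rw [Nat.cast_succ, add_one_mul, add_one_mul,
      ← integral_add_adjacent_intervals (hfi 0 (n * T)) (hfi _ _)]
    linarith [hPE (n * T) (by positivity)]

theorem div_mul_sub_le_integral_of_le_integral_add (hf : LocallyIntegrable f)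
    (hf₀ : ∀ s, 0 ≤ s → 0 ≤ f s) (hT : 0 < T) (hδ : 0 ≤ δ)
    (hPE : ∀ t, 0 ≤ t → δ ≤ ∫ s in t..(t + T), f s) {t : ℝ} (ht : 0 ≤ t) :
    δ / T * t - δ ≤ ∫ s in (0 : ℝ)..t, f s := by
  set n := ⌊t / T⌋₊
  have hnT : n * T ≤ t := (le_div_iff₀ hT).1 (Nat.floor_le (by positivity))
  have hn : t / T - 1 ≤ n := by linarith [Nat.lt_floor_add_one (t / T)]
  have hmono : ∫ s in (0 : ℝ)..(n * T), f s ≤ ∫ s in (0 : ℝ)..t, f s :=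
    integral_mono_interval le_rfl (by positivity) hnT
      (ae_restrict_of_forall_mem measurableSet_Ioc fun s hs => hf₀ s hs.1.le)
      ((hf.integrableOn_isCompact isCompact_uIcc).intervalIntegrable)
  calc δ / T * t - δ = δ * (t / T - 1) := by ring
    _ ≤ n * δ := by nlinarith
    _ ≤ ∫ s in (0 : ℝ)..t, f s :=
      (nat_mul_le_integral_of_le_integral_add hf hT.le hPE n).trans hmono

end PersistentExcitation

theorem le_exp_neg_integral_mul_of_hasDerivAt {a V V' : ℝ → ℝ} (ha : Continuous a)
    (hV : ∀ t, 0 ≤ t → HasDerivAt V (V' t) t) (hV' : ∀ t, 0 ≤ t → V' t ≤ -a t * V t)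
    {t : ℝ} (ht : 0 ≤ t) :
    V t ≤ exp (-∫ s in (0 : ℝ)..t, a s) * V 0 := by
  set A : ℝ → ℝ := fun u => ∫ s in (0 : ℝ)..u, a s
  have hg : ∀ u, 0 ≤ u →
      HasDerivAt (fun u => V u * exp (A u)) ((V' u + a u * V u) * exp (A u)) u := by
    intro u hu
    have hA : HasDerivAt A (a u) u := (ha.integral_hasStrictDerivAt 0 u).hasDerivAt
    exact ((hV u hu).fun_mul hA.exp).congr_deriv (by ring)
  have hanti : AntitoneOn (fun u => V u * exp (A u)) (Set.Ici 0) := by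
    refine antitoneOn_of_hasDerivWithinAt_nonpos (f' := fun u => (V' u + a u * V u) * exp (A u))
      (convex_Ici 0)
      (fun u hu => (hg u hu).continuousAt.continuousWithinAt) (fun u hu => ?_) (fun u hu => ?_)
    · rw [interior_Ici] at hu
      exact (hg u hu.le).hasDerivWithinAt
    · rw [interior_Ici] at hu
      exact mul_nonpos_of_nonpos_of_nonneg (by linarith [hV' u hu.le]) (exp_pos _).le
  have hle : V t * exp (A t) ≤ V 0 := by
    simpa [A] using hanti Set.self_mem_Ici ht ht
  calc V t = V t * exp (A t) * exp (-A t) := by rw [mul_assoc, ← exp_add]; simp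
    _ ≤ V 0 * exp (-A t) := mul_le_mul_of_nonneg_right hle (exp_pos _).le
    _ = exp (-A t) * V 0 := mul_comm _ _

/-- a nonnegative differentiable `V` with `V̇ ≤ -c Δ² V` and `Δ`
persistently exciting converges to zero exponentially. -/
theorem stmt4 (Δ : ℝ → ℝ) (V V' : ℝ → ℝ) (T δ c : ℝ)
    (hΔ : Continuous Δ) (hT : 0 < T) (hδ : 0 < δ) (hc : 0 < c)
    (hPE : ∀ t, 0 ≤ t → δ ≤ ∫ s in t..(t + T), (Δ s) ^ 2)
    (hVnn : ∀ t, 0 ≤ t → 0 ≤ V t)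
    (hV : ∀ t, 0 ≤ t → HasDerivAt V (V' t) t)
    (hV' : ∀ t, 0 ≤ t → V' t ≤ -c * (Δ t) ^ 2 * V t) :
    ∃ K lam : ℝ, 0 < K ∧ 0 < lam ∧
      ∀ t, 0 ≤ t → V t ≤ K * Real.exp (-lam * t) * V 0 := by
  have hΔ2 : Continuous fun s => Δ s ^ 2 := hΔ.pow 2
  refine ⟨exp (c * δ), c * δ / T, exp_pos _, by positivity, fun t ht => ?_⟩
  have hdecay := le_exp_neg_integral_mul_of_hasDerivAt (hΔ2.const_mul c) hV
    (fun u hu => by simpa only [mul_assoc, neg_mul] using hV' u hu) ht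
  have hgrowth : δ / T * t - δ ≤ ∫ s in (0 : ℝ)..t, Δ s ^ 2 :=
    div_mul_sub_le_integral_of_le_integral_add hΔ2.locallyIntegrable
      (fun s _ => sq_nonneg (Δ s)) hT hδ.le hPE ht
  rw [intervalIntegral.integral_const_mul] at hdecay
  have hexp :
      exp (-(c * ∫ s in (0 : ℝ)..t, Δ s ^ 2)) ≤ exp (c * δ) * exp (-(c * δ / T) * t) := by
    rw [← exp_add, exp_le_exp]
    have h := mul_le_mul_of_nonneg_left hgrowth hc.le
    rw [show c * (δ / T * t - δ) = c * δ / T * t - c * δ by ring] at h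
    linarith
  exact hdecay.trans (mul_le_mul_of_nonneg_right hexp (hVnn 0 le_rfl))
end

section
/- For a linear regression equation y(t) = φ(t)ᵀθ with θ ∈ ℝ^q, identifiability (existence of times t₁,...,t_q with rank[φ(t₁) | ... | φ(t_q)] = q) holds if and only if φ is interval exciting, i.e. there exist C > 0 and t_c > 0 with ∫₀^{t_c} φ(s)φ(s)ᵀ ds ≥ C I_q. -/
/-!
The quadratic form of `G(T) = ∫₀ᵀ φ φᵀ` is `x ↦ ∫₀ᵀ (φ(s) ⬝ x)²`, which by continuity of `φ`
vanishes exactly when `x` is orthogonal to every `φ(s)`, `s ∈ [0, T]`. Hence `G(T)` is positive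
definite iff `φ([0, T])` spans `ℝ^q`, i.e. iff `q` of the regressors `φ(s)`, `s ∈ [0, T]`, are
linearly independent; and a positive definite matrix dominates `C • 1` for its least
eigenvalue `C > 0`.
-/

open Matrix MeasureTheory Set Submodule

theorem exists_linearIndependent_mem_of_span_eq_top {ι K V : Type*} [DivisionRing K]
    [AddCommGroup V] [Module K V] {S : Set V} (hS : span K S = ⊤) (b : Module.Basis ι K V) :
    ∃ v : ι → V, (∀ i, v i ∈ S) ∧ LinearIndependent K v := by
  let b' := Module.Basis.ofSpan hS.ge
  let e := b.indexEquiv b'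
  exact ⟨b' ∘ e, fun i => Module.Basis.ofSpan_subset hS.ge ⟨e i, rfl⟩,
    b'.linearIndependent.comp e e.injective⟩

theorem span_eq_top_iff_forall_dotProduct_eq_zero {K n : Type*} [Field K] [Fintype n]
    [DecidableEq n] {S : Set (n → K)} :
    span K S = ⊤ ↔ ∀ x : n → K, (∀ v ∈ S, v ⬝ᵥ x = 0) → x = 0 := by
  rw [← dualAnnihilator_eq_bot_iff, eq_bot_iff, SetLike.le_def,
    ← (dotProductEquiv K n).forall_congr_right]
  refine forall_congr' fun x => ?_
  rw [← SetLike.mem_coe, coe_dualAnnihilator_span]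
  simp [Set.subset_def, dotProduct_comm x]

theorem intervalIntegral.integral_eq_zero_iff_eqOn_of_nonneg {f : ℝ → ℝ} {a b : ℝ} (hab : a < b)
    (hf : ContinuousOn f (Icc a b)) (h0 : ∀ s ∈ Icc a b, 0 ≤ f s) :
    ∫ s in a..b, f s = 0 ↔ EqOn f 0 (Icc a b) := by
  rw [intervalIntegral.integral_eq_zero_iff_of_le_of_nonneg_ae hab.le
      ((ae_restrict_iff' measurableSet_Ioc).2
        (.of_forall fun s hs => h0 s (Ioc_subset_Icc_self hs)))
      (hf.intervalIntegrable_of_Icc hab.le), Measure.restrict_congr_set Ioc_ae_eq_Icc]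
  exact ⟨fun h => Measure.eqOn_Icc_of_ae_eq volume hab.ne h hf continuousOn_const,
    fun h => (ae_restrict_iff' measurableSet_Icc).2 (.of_forall h)⟩

section ExcitationGram

variable {n : Type*}

noncomputable def excitationGram (φ : ℝ → n → ℝ) (T : ℝ) : Matrix n n ℝ :=
  of fun i j => ∫ s in (0:ℝ)..T, φ s i * φ s j

theorem excitationGram_isHermitian (φ : ℝ → n → ℝ) (T : ℝ) :
    (excitationGram φ T).IsHermitian := by
  ext i j
  simp [excitationGram, mul_comm]

theorem dotProduct_excitationGram_mulVec [Fintype n] {φ : ℝ → n → ℝ} (hφ : Continuous φ)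
    (T : ℝ) (x : n → ℝ) :
    x ⬝ᵥ (excitationGram φ T *ᵥ x) = ∫ s in (0:ℝ)..T, (φ s ⬝ᵥ x) ^ 2 := by
  have hint : ∀ i j, IntervalIntegrable (fun s => φ s i * x i * (φ s j * x j)) volume 0 T :=
    fun i j => Continuous.intervalIntegrable (by fun_prop) 0 T
  calc x ⬝ᵥ (excitationGram φ T *ᵥ x)
      = ∑ i, ∑ j, ∫ s in (0:ℝ)..T, φ s i * x i * (φ s j * x j) := by
        simp only [dotProduct, mulVec, excitationGram, of_apply, Finset.mul_sum,
          ← intervalIntegral.integral_mul_const, ← intervalIntegral.integral_const_mul]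
        congr! 3 with i - j
        ext s
        ring
    _ = ∫ s in (0:ℝ)..T, (φ s ⬝ᵥ x) ^ 2 := by
        simp_rw [sq, dotProduct, Finset.sum_mul_sum]
        rw [intervalIntegral.integral_finsetSum fun i _ =>
          Continuous.intervalIntegrable (by fun_prop) 0 T]
        exact Finset.sum_congr rfl fun i _ =>
          (intervalIntegral.integral_finsetSum fun j _ => hint i j).symm

theorem excitationGram_posDef_iff [Fintype n] [DecidableEq n] {φ : ℝ → n → ℝ}
    (hφ : Continuous φ) {T : ℝ} (hT : 0 < T) :
    (excitationGram φ T).PosDef ↔ span ℝ (φ '' Icc 0 T) = ⊤ := by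
  simp only [posDef_iff_dotProduct_mulVec, excitationGram_isHermitian, true_and, star_trivial,
    dotProduct_excitationGram_mulVec hφ, span_eq_top_iff_forall_dotProduct_eq_zero,
    forall_mem_image]
  refine forall_congr' fun x => ?_
  have hint := intervalIntegral.integral_eq_zero_iff_eqOn_of_nonneg hT
    (f := fun s => (φ s ⬝ᵥ x) ^ 2) (by fun_prop) fun s _ => sq_nonneg _
  have hnonneg : 0 ≤ ∫ s in (0:ℝ)..T, (φ s ⬝ᵥ x) ^ 2 :=
    intervalIntegral.integral_nonneg hT.le fun s _ => sq_nonneg _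
  rw [not_imp_comm, hnonneg.lt_iff_ne', not_not, hint]
  simp [EqOn]

end ExcitationGram

open scoped ComplexOrder in
theorem Matrix.posDef_iff_exists_pos_posSemidef_sub_smul_one {n 𝕜 : Type*} [Fintype n]
    [DecidableEq n] [RCLike 𝕜] {A : Matrix n n 𝕜} :
    A.PosDef ↔ ∃ c : ℝ, 0 < c ∧ (A - c • 1).PosSemidef := by
  refine ⟨fun hA => ?_, fun ⟨c, hc, h⟩ => by
    simpa using PosDef.posSemidef_add h (PosDef.one.smul hc)⟩
  cases isEmpty_or_nonempty n
  · exact ⟨1, one_pos, Subsingleton.elim (0 : Matrix n n 𝕜) (A - (1 : ℝ) • 1) ▸ .zero⟩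
  · open scoped MatrixOrder in
    obtain ⟨c, hc, hle⟩ := (CFC.exists_pos_algebraMap_le_iff hA.isHermitian).2
      fun x hx => hA.isStrictlyPositive.spectrum_pos hx
    exact ⟨c, hc, le_iff.mp (by simpa [Algebra.algebraMap_eq_smul_one] using hle)⟩

/-- for a linear regression with regressor `φ`, identifiability
(existence of `q` times where the regressor vectors are linearly independent) is
equivalent to interval excitation of `φ`. -/
theorem stmt8 {q : ℕ} (φ : ℝ → Fin q → ℝ) (hφ : Continuous φ) :
    (∃ t : Fin q → ℝ, (∀ i, 0 ≤ t i) ∧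
      LinearIndependent ℝ (fun i : Fin q => φ (t i))) ↔
    (∃ C t_c : ℝ, 0 < C ∧ 0 < t_c ∧
      (Matrix.of (fun i j => ∫ s in (0:ℝ)..t_c, φ s i * φ s j) -
        C • (1 : Matrix (Fin q) (Fin q) ℝ)).PosSemidef) := by
  constructor
  · rintro ⟨t, ht0, hli⟩
    set T := 1 + ∑ i, t i
    have hT : 0 < T := add_pos_of_pos_of_nonneg one_pos (Finset.sum_nonneg fun i _ => ht0 i)
    have hrange : range (fun i => φ (t i)) ⊆ φ '' Icc 0 T := by
      rintro _ ⟨i, rfl⟩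
      have hti := Finset.single_le_sum (fun j _ => ht0 j) (Finset.mem_univ i)
      exact mem_image_of_mem φ ⟨ht0 i, by linarith⟩
    have hspan : span ℝ (φ '' Icc 0 T) = ⊤ :=
      eq_top_mono (span_mono hrange) (hli.span_eq_top_of_card_eq_finrank' (by simp))
    obtain ⟨C, hC, hpsd⟩ := posDef_iff_exists_pos_posSemidef_sub_smul_one.1
      ((excitationGram_posDef_iff hφ hT).2 hspan)
    exact ⟨C, T, hC, hT, hpsd⟩
  · rintro ⟨C, T, hC, hT, hpsd⟩
    have hspan := (excitationGram_posDef_iff hφ hT).1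
      (posDef_iff_exists_pos_posSemidef_sub_smul_one.2 ⟨C, hC, hpsd⟩)
    obtain ⟨v, hv, hli⟩ :=
      exists_linearIndependent_mem_of_span_eq_top hspan (Pi.basisFun ℝ (Fin q))
    choose t ht hφt using hv
    exact ⟨t, fun i => (ht i).1, by simpa only [hφt] using hli⟩
end

section
/- Let η̃_{k+1} = (I_p - (1/m_k) F_{k-1} φ_k φ_kᵀ) η̃_k where m_k = β + φ_kᵀ F_{k-1} φ_k, and suppose F_k⁻¹ = β F_{k-1}⁻¹ + φ_k φ_kᵀ. Then F_k⁻¹ η̃_{k+1} = β F_{k-1}⁻¹ η̃_k for all k, and consequently F_{k-1}⁻¹ η̃_k = β^k F_{-1}⁻¹ η̃_0 for all k ≥ 0. -/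
/-!
Writing `a = φᵀ η`, the update moves `η` by `-(a/m) F φ`. Applying `β F⁻¹ + φ φᵀ` to `F φ`
gives `(β + φᵀ F φ) φ = m φ`, so the correction contributes exactly `-a φ`, which cancels the
term `φ φᵀ η = a φ`. Iterating the one-step identity gives the power of `β`.
-/

open Matrix

section

variable {K n : Type*} [Field K] [Fintype n] [DecidableEq n]

theorem smul_inv_add_vecMulVec_mulVec_mulVec {A : Matrix n n K} (hA : IsUnit A) (β : K)
    (u v : n → K) :
    (β • A⁻¹ + vecMulVec u v) *ᵥ (A *ᵥ u) = (β + v ⬝ᵥ A *ᵥ u) • u := by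
  have hAu : A⁻¹ *ᵥ (A *ᵥ u) = u := by
    rw [mulVec_mulVec, nonsing_inv_mul _ ((isUnit_iff_isUnit_det A).mp hA), one_mulVec]
  rw [add_mulVec, smul_mulVec, hAu, vecMulVec_mulVec, op_smul_eq_smul, add_smul]

theorem smul_inv_add_vecMulVec_mulVec_sub_inv_smul {A : Matrix n n K} (hA : IsUnit A) (β : K)
    (u v η : n → K) (hm : β + v ⬝ᵥ A *ᵥ u ≠ 0) :
    (β • A⁻¹ + vecMulVec u v) *ᵥ
        (η - (β + v ⬝ᵥ A *ᵥ u)⁻¹ • A *ᵥ (vecMulVec u v *ᵥ η)) =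
      β • A⁻¹ *ᵥ η := by
  set m := β + v ⬝ᵥ A *ᵥ u
  have hrank : ∀ w, vecMulVec u v *ᵥ w = (v ⬝ᵥ w) • u := fun w => by
    rw [vecMulVec_mulVec, op_smul_eq_smul]
  have hcancel : (m⁻¹ * (v ⬝ᵥ η) * m) • u = (v ⬝ᵥ η) • u := by
    rw [mul_comm, ← mul_assoc, mul_inv_cancel₀ hm, one_mul]
  rw [hrank η, mulVec_smul, smul_smul, mulVec_sub, mulVec_smul,
    smul_inv_add_vecMulVec_mulVec_mulVec hA, smul_smul, hcancel, add_mulVec, smul_mulVec,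
    hrank, add_sub_cancel_right]

end

theorem eq_pow_smul_of_succ_eq_smul {R M : Type*} [Monoid R] [MulAction R M] (β : R)
    {x : ℕ → M} (hx : ∀ k, x (k + 1) = β • x k) (k : ℕ) : x k = β ^ k • x 0 := by
  induction k with
  | zero => rw [pow_zero, one_smul]
  | succ k ih => rw [hx, ih, smul_smul, pow_succ']

theorem stmt11_general {p : ℕ} (φ : ℕ → Fin p → ℝ) (β : ℝ)
    (F : ℕ → Matrix (Fin p) (Fin p) ℝ) (η : ℕ → Fin p → ℝ)
    (hFu : ∀ k, IsUnit (F k))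
    (hm : ∀ k, 0 < β + φ k ⬝ᵥ (F k).mulVec (φ k))
    (hFinv : ∀ k : ℕ, (F (k + 1))⁻¹ = β • (F k)⁻¹ + vecMulVec (φ k) (φ k))
    (hη : ∀ k : ℕ, η (k + 1) = η k -
      (β + φ k ⬝ᵥ (F k).mulVec (φ k))⁻¹ •
        (F k).mulVec ((vecMulVec (φ k) (φ k)).mulVec (η k))) :
    (∀ k : ℕ, (F (k + 1))⁻¹.mulVec (η (k + 1)) = β • (F k)⁻¹.mulVec (η k)) ∧
    (∀ k : ℕ, (F k)⁻¹.mulVec (η k) = β ^ k • (F 0)⁻¹.mulVec (η 0)) := by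
  have step : ∀ k, (F (k + 1))⁻¹.mulVec (η (k + 1)) = β • (F k)⁻¹.mulVec (η k) := fun k => by
    rw [hFinv, hη]
    exact smul_inv_add_vecMulVec_mulVec_sub_inv_smul (hFu k) β _ _ _ (hm k).ne'
  exact ⟨step, eq_pow_smul_of_succ_eq_smul β (x := fun k => (F k)⁻¹.mulVec (η k)) step⟩

/-- fundamental property of the DT LS estimator:
`F_k⁻¹ η̃_{k+1} = β F_{k-1}⁻¹ η̃_k`, hence `F_{k-1}⁻¹ η̃_k = βᵏ F_{-1}⁻¹ η̃_0`.
Here `F k` stands for `F_{k-1}`, so `F 0 = F_{-1}`. -/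
theorem stmt11 {p : ℕ} (φ : ℕ → Fin p → ℝ) (β : ℝ) (hβ : 0 < β)
    (F : ℕ → Matrix (Fin p) (Fin p) ℝ) (η : ℕ → Fin p → ℝ)
    (hFu : ∀ k, IsUnit (F k))
    (hm : ∀ k, 0 < β + φ k ⬝ᵥ (F k).mulVec (φ k))
    (hFinv : ∀ k : ℕ, (F (k + 1))⁻¹ = β • (F k)⁻¹ + vecMulVec (φ k) (φ k))
    (hη : ∀ k : ℕ, η (k + 1) = η k -
      (β + φ k ⬝ᵥ (F k).mulVec (φ k))⁻¹ •
        (F k).mulVec ((vecMulVec (φ k) (φ k)).mulVec (η k))) :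
    (∀ k : ℕ, (F (k + 1))⁻¹.mulVec (η (k + 1)) = β • (F k)⁻¹.mulVec (η k)) ∧
    (∀ k : ℕ, (F k)⁻¹.mulVec (η k) = β ^ k • (F 0)⁻¹.mulVec (η 0)) :=
  stmt11_general φ β F η hFu hm hFinv hη
end

section
/- Let θ̃_{k+1} = θ̃_k - γ Δ̄_k² Q (G(θ̃_k + θ) - G(θ)) where Q·G is strongly monotone with constant ρ, G is ν-Lipschitz, Δ̄_k² ≤ 1, and σ := ρ - (γν²/2)λ_max(QᵀQ) > 0. Then V_k := (1/2γ)|θ̃_k|² satisfies V_{k+1} ≤ V_k - σ Δ̄_k² |θ̃_k|² for all k. -/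
/-!
Writing `e = θ̃_k`, `w = Q (G (e + θ) - G θ)` and `d = Δ̄_k²`, the update is `e - γ d w`, so
`|θ̃_{k+1}|² = |e|² - 2γd (e ⬝ w) + γ²d² |w|²`. Strong monotonicity bounds `e ⬝ w` below by `ρ|e|²`;
the eigenvalue bound and the Lipschitz bound give `|w|² ≤ λ ν² |e|²`; and `d² ≤ d` because `d ∈ [0, 1]`.
Together `|θ̃_{k+1}|² ≤ |e|² - 2γdσ|e|²`.
-/

open Matrix

namespace Matrix

variable {ι κ : Type*} [Fintype ι] [Fintype κ]

lemma dotProduct_transpose_mul_self_mulVec {R : Type*} [CommSemiring R] (Q : Matrix ι κ R)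
    (v : κ → R) : v ⬝ᵥ (Qᵀ * Q) *ᵥ v = Q *ᵥ v ⬝ᵥ Q *ᵥ v := by
  rw [← mulVec_mulVec, dotProduct_mulVec, vecMul_transpose]

lemma dotProduct_self_sub_smul {R : Type*} [CommRing R] (e w : ι → R) (c : R) :
    (e - c • w) ⬝ᵥ (e - c • w) = e ⬝ᵥ e - 2 * c * (e ⬝ᵥ w) + c ^ 2 * (w ⬝ᵥ w) := by
  simp only [sub_dotProduct, dotProduct_sub, smul_dotProduct, dotProduct_smul,
    dotProduct_comm w e, smul_eq_mul]
  ring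

lemma dotProduct_self_nonneg_real (v : ι → ℝ) : 0 ≤ v ⬝ᵥ v := by
  simpa using dotProduct_self_star_nonneg v

lemma dotProduct_self_le_of_coercive {e : ι → ℝ} {w : ι → ℝ} {g : κ → ℝ} {ρ ν lm : ℝ}
    (hρ : 0 < ρ) (hcoer : ρ * (e ⬝ᵥ e) ≤ e ⬝ᵥ w) (hw : w ⬝ᵥ w ≤ lm * (g ⬝ᵥ g))
    (hg : g ⬝ᵥ g ≤ ν ^ 2 * (e ⬝ᵥ e)) :
    w ⬝ᵥ w ≤ lm * ν ^ 2 * (e ⬝ᵥ e) := by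
  rcases le_or_gt 0 lm with hlm | hlm
  · calc w ⬝ᵥ w ≤ lm * (g ⬝ᵥ g) := hw
      _ ≤ lm * (ν ^ 2 * (e ⬝ᵥ e)) := by gcongr
      _ = lm * ν ^ 2 * (e ⬝ᵥ e) := by ring
  · -- a negative `lm` forces `w = 0`, and then coercivity forces `e = 0`
    have hw0 : w = 0 := by
      rw [← dotProduct_self_eq_zero]
      nlinarith [dotProduct_self_nonneg_real w, dotProduct_self_nonneg_real g]
    have he0 : e ⬝ᵥ e = 0 := by
      rw [hw0, dotProduct_zero] at hcoer
      nlinarith [dotProduct_self_nonneg_real e]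
    rw [hw0, he0, dotProduct_zero, mul_zero]

lemma dotProduct_self_sub_smul_le {e w : ι → ℝ} {γ d ρ L : ℝ} (hγ : 0 < γ)
    (hd₀ : 0 ≤ d) (hd₁ : d ≤ 1) (hcoer : ρ * (e ⬝ᵥ e) ≤ e ⬝ᵥ w)
    (hw : w ⬝ᵥ w ≤ L * (e ⬝ᵥ e)) :
    (e - (γ * d) • w) ⬝ᵥ (e - (γ * d) • w) ≤
      e ⬝ᵥ e - 2 * γ * ((ρ - γ * L / 2) * d * (e ⬝ᵥ e)) := by
  have hL : 0 ≤ L * (e ⬝ᵥ e) := (dotProduct_self_nonneg_real w).trans hw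
  have hcross : 2 * (γ * d) * (ρ * (e ⬝ᵥ e)) ≤ 2 * (γ * d) * (e ⬝ᵥ w) := by gcongr
  have hquad : (γ * d) ^ 2 * (w ⬝ᵥ w) ≤ γ ^ 2 * d * (L * (e ⬝ᵥ e)) :=
    calc (γ * d) ^ 2 * (w ⬝ᵥ w) ≤ (γ * d) ^ 2 * (L * (e ⬝ᵥ e)) := by gcongr
      _ = γ ^ 2 * d ^ 2 * (L * (e ⬝ᵥ e)) := by ring
      _ ≤ γ ^ 2 * d * (L * (e ⬝ᵥ e)) := by gcongr; nlinarith
  rw [dotProduct_self_sub_smul]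
  linarith

end Matrix

theorem stmt12_general {p q : ℕ} (θt : ℕ → Fin q → ℝ) (θ : Fin q → ℝ)
    (G : (Fin q → ℝ) → (Fin p → ℝ)) (Q : Matrix (Fin q) (Fin p) ℝ)
    (Δ : ℕ → ℝ) (γ ρ ν lm σ : ℝ)
    (hγ : 0 < γ) (hρ : 0 < ρ)
    (hmono : ∀ a b : Fin q → ℝ,
      ρ * ((a - b) ⬝ᵥ (a - b)) ≤ (a - b) ⬝ᵥ Q.mulVec (G a - G b))
    (hlip : ∀ a b : Fin q → ℝ,
      (G a - G b) ⬝ᵥ (G a - G b) ≤ ν ^ 2 * ((a - b) ⬝ᵥ (a - b)))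
    (hlm : ∀ v : Fin p → ℝ, v ⬝ᵥ (Qᵀ * Q).mulVec v ≤ lm * (v ⬝ᵥ v))
    (hΔ : ∀ k, (Δ k) ^ 2 ≤ 1)
    (hσ : σ = ρ - γ * ν ^ 2 / 2 * lm)
    (hrec : ∀ k : ℕ, θt (k + 1) =
      θt k - (γ * (Δ k) ^ 2) • Q.mulVec (G (θt k + θ) - G θ)) :
    ∀ k : ℕ, (1 / (2 * γ)) * (θt (k + 1) ⬝ᵥ θt (k + 1)) ≤
      (1 / (2 * γ)) * (θt k ⬝ᵥ θt k) - σ * (Δ k) ^ 2 * (θt k ⬝ᵥ θt k) := by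
  intro k
  set e := θt k
  set g := G (e + θ) - G θ
  have hcoer : ρ * (e ⬝ᵥ e) ≤ e ⬝ᵥ Q *ᵥ g := by simpa only [add_sub_cancel_right] using hmono (e + θ) θ
  have hg : g ⬝ᵥ g ≤ ν ^ 2 * (e ⬝ᵥ e) := by simpa only [add_sub_cancel_right] using hlip (e + θ) θ
  have hw : Q *ᵥ g ⬝ᵥ Q *ᵥ g ≤ lm * ν ^ 2 * (e ⬝ᵥ e) :=
    dotProduct_self_le_of_coercive hρ hcoer
      ((dotProduct_transpose_mul_self_mulVec Q g).symm.trans_le (hlm g)) hg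
  have hstep := dotProduct_self_sub_smul_le hγ (sq_nonneg (Δ k)) (hΔ k) hcoer hw
  rw [show ρ - γ * (lm * ν ^ 2) / 2 = σ by rw [hσ]; ring] at hstep
  rw [hrec k]
  calc (1 / (2 * γ)) * ((e - (γ * Δ k ^ 2) • Q *ᵥ g) ⬝ᵥ (e - (γ * Δ k ^ 2) • Q *ᵥ g))
      ≤ (1 / (2 * γ)) * (e ⬝ᵥ e - 2 * γ * (σ * Δ k ^ 2 * (e ⬝ᵥ e))) := by gcongr
    _ = (1 / (2 * γ)) * (e ⬝ᵥ e) - σ * Δ k ^ 2 * (e ⬝ᵥ e) := by field_simp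

/-- DT Lyapunov decrement for the NLPRE parameter-error dynamics. -/
theorem stmt12 {p q : ℕ} (θt : ℕ → Fin q → ℝ) (θ : Fin q → ℝ)
    (G : (Fin q → ℝ) → (Fin p → ℝ)) (Q : Matrix (Fin q) (Fin p) ℝ)
    (Δ : ℕ → ℝ) (γ ρ ν lm σ : ℝ)
    (hγ : 0 < γ) (hρ : 0 < ρ) (hν : 0 < ν)
    (hmono : ∀ a b : Fin q → ℝ,
      ρ * ((a - b) ⬝ᵥ (a - b)) ≤ (a - b) ⬝ᵥ Q.mulVec (G a - G b))
    (hlip : ∀ a b : Fin q → ℝ,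
      (G a - G b) ⬝ᵥ (G a - G b) ≤ ν ^ 2 * ((a - b) ⬝ᵥ (a - b)))
    (hlm : ∀ v : Fin p → ℝ, v ⬝ᵥ (Qᵀ * Q).mulVec v ≤ lm * (v ⬝ᵥ v))
    (hΔ : ∀ k, (Δ k) ^ 2 ≤ 1)
    (hσ : σ = ρ - γ * ν ^ 2 / 2 * lm) (hσpos : 0 < σ)
    (hrec : ∀ k : ℕ, θt (k + 1) =
      θt k - (γ * (Δ k) ^ 2) • Q.mulVec (G (θt k + θ) - G θ)) :
    ∀ k : ℕ, (1 / (2 * γ)) * (θt (k + 1) ⬝ᵥ θt (k + 1)) ≤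
      (1 / (2 * γ)) * (θt k ⬝ᵥ θt k) - σ * (Δ k) ^ 2 * (θt k ⬝ᵥ θt k) :=
  stmt12_general θt θ G Q Δ γ ρ ν lm σ hγ hρ hmono hlip hlm hΔ hσ hrec
end

section
/- Assume the discrete IE condition ∑_{j=0}^{k_c} φ_j φ_jᵀ ≥ C_d I_p with C_d > 0, and let F_k⁻¹ = β^{k+1} f₀ I_p + β^k ∑_{j=0}^{k} β^{-j} φ_j φ_jᵀ with β ∈ (0,1], f₀ > 0. Then for every k ≥ k_c the matrix I_p - f₀ β^{k+1} F_k is nonsingular; in particular Δ_k := det(I_p - f₀ β^{k+1} F_k) ≠ 0 for k ≥ k_c. -/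
/-!
Write `S_k = ∑_{j ≤ k} β⁻ʲ φ_j φ_jᵀ`, so that `F_k⁻¹ = f₀ β^{k+1} I + β^k S_k` and hence
`I - f₀ β^{k+1} F_k = β^k F_k S_k`. Since `β⁻ʲ ≥ 1`, for `k ≥ k_c` the weighted Gram sum `S_k`
dominates the Gram sum over `j ≤ k_c`, which dominates `C_d I` by interval excitation; so `S_k`
is positive definite, and `I - f₀ β^{k+1} F_k` is a product of invertible matrices.
-/

open Matrix Finset

open scoped MatrixOrder

namespace Matrix

variable {n : Type*}

theorem posDef_of_smul_one_le [DecidableEq n] {c : ℝ} (hc : 0 < c) {A : Matrix n n ℝ}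
    (h : c • 1 ≤ A) : A.PosDef := by
  simpa using PosDef.posSemidef_add (le_iff.mp h) (PosDef.one.smul hc)

variable [Fintype n]

theorem vecMulVec_self_nonneg (v : n → ℝ) : 0 ≤ vecMulVec v v :=
  (posSemidef_vecMulVec_self_star v).nonneg

theorem vecMulVec_self_le_smul {w : ℝ} (hw : 1 ≤ w) (v : n → ℝ) :
    vecMulVec v v ≤ w • vecMulVec v v := by
  rw [le_iff, ← one_smul ℝ (vecMulVec v v), smul_smul, mul_one, ← sub_smul]
  exact (vecMulVec_self_nonneg v).posSemidef.smul (sub_nonneg.mpr hw)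

theorem sum_vecMulVec_self_le_sum_smul {ι : Type*} {s t : Finset ι} (hst : s ⊆ t)
    (v : ι → n → ℝ) {w : ι → ℝ} (hw : ∀ j ∈ t, 1 ≤ w j) :
    ∑ j ∈ s, vecMulVec (v j) (v j) ≤ ∑ j ∈ t, w j • vecMulVec (v j) (v j) :=
  calc ∑ j ∈ s, vecMulVec (v j) (v j)
      ≤ ∑ j ∈ s, w j • vecMulVec (v j) (v j) :=
        sum_le_sum fun j hj => vecMulVec_self_le_smul (hw j (hst hj)) (v j)
    _ ≤ ∑ j ∈ t, w j • vecMulVec (v j) (v j) :=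
        sum_le_sum_of_subset_of_nonneg hst fun j hj _ =>
          (vecMulVec_self_nonneg (v j)).trans (vecMulVec_self_le_smul (hw j hj) (v j))

theorem one_sub_smul_eq_mul_of_inv_eq {K : Type*} [Field K] [DecidableEq n]
    {F B : Matrix n n K} {a : K} (hF : IsUnit F) (h : F⁻¹ = a • 1 + B) :
    1 - a • F = F * B := by
  have hFF := F.mul_nonsing_inv ((isUnit_iff_isUnit_det F).mp hF)
  rw [h, mul_add, Matrix.mul_smul, mul_one] at hFF
  rw [← hFF, add_sub_cancel_left]

end Matrix

theorem stmt15_general {p : ℕ} (φ : ℕ → Fin p → ℝ) (β f₀ C_d : ℝ) (k_c : ℕ)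
    (hβ0 : 0 < β) (hβ1 : β ≤ 1) (hCd : 0 < C_d)
    (F : ℕ → Matrix (Fin p) (Fin p) ℝ)
    (hFu : ∀ k, IsUnit (F k))
    (hFinv : ∀ k : ℕ, (F k)⁻¹ =
      (β ^ (k + 1) * f₀) • (1 : Matrix (Fin p) (Fin p) ℝ) +
      β ^ k • ∑ j ∈ Finset.range (k + 1), (β⁻¹) ^ j • vecMulVec (φ j) (φ j))
    (hIE : ((∑ j ∈ Finset.range (k_c + 1), vecMulVec (φ j) (φ j)) -
      C_d • (1 : Matrix (Fin p) (Fin p) ℝ)).PosSemidef) :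
    ∀ k : ℕ, k_c ≤ k →
      IsUnit ((1 : Matrix (Fin p) (Fin p) ℝ) - (f₀ * β ^ (k + 1)) • F k) ∧
      ((1 : Matrix (Fin p) (Fin p) ℝ) - (f₀ * β ^ (k + 1)) • F k).det ≠ 0 := by
  intro k hk
  set S := ∑ j ∈ Finset.range (k + 1), (β⁻¹) ^ j • vecMulVec (φ j) (φ j)
  have hS : S.PosDef := posDef_of_smul_one_le hCd <| (le_iff.mpr hIE).trans <|
    sum_vecMulVec_self_le_sum_smul (range_subset_range.mpr (by omega)) φ
      fun j _ => one_le_pow₀ ((one_le_inv₀ hβ0).mpr hβ1)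
  have hkey : 1 - (f₀ * β ^ (k + 1)) • F k = F k * β ^ k • S :=
    one_sub_smul_eq_mul_of_inv_eq (hFu k) (mul_comm f₀ _ ▸ hFinv k)
  have hunit : IsUnit (1 - (f₀ * β ^ (k + 1)) • F k) :=
    hkey ▸ (hFu k).mul (hS.smul (pow_pos hβ0 k)).isUnit
  exact ⟨hunit, ((isUnit_iff_isUnit_det _).mp hunit).ne_zero⟩

/-- under discrete interval excitation, `I - f₀ β^{k+1} F_k` is
nonsingular for all `k ≥ k_c`; in particular its determinant is nonzero. -/
theorem stmt15 {p : ℕ} (φ : ℕ → Fin p → ℝ) (β f₀ C_d : ℝ) (k_c : ℕ)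
    (hβ0 : 0 < β) (hβ1 : β ≤ 1) (hf₀ : 0 < f₀) (hCd : 0 < C_d)
    (F : ℕ → Matrix (Fin p) (Fin p) ℝ)
    (hFu : ∀ k, IsUnit (F k))
    (hFinv : ∀ k : ℕ, (F k)⁻¹ =
      (β ^ (k + 1) * f₀) • (1 : Matrix (Fin p) (Fin p) ℝ) +
      β ^ k • ∑ j ∈ Finset.range (k + 1), (β⁻¹) ^ j • vecMulVec (φ j) (φ j))
    (hIE : ((∑ j ∈ Finset.range (k_c + 1), vecMulVec (φ j) (φ j)) -
      C_d • (1 : Matrix (Fin p) (Fin p) ℝ)).PosSemidef) :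
    ∀ k : ℕ, k_c ≤ k →
      IsUnit ((1 : Matrix (Fin p) (Fin p) ℝ) - (f₀ * β ^ (k + 1)) • F k) ∧
      ((1 : Matrix (Fin p) (Fin p) ℝ) - (f₀ * β ^ (k + 1)) • F k).det ≠ 0 :=
  stmt15_general φ β f₀ C_d k_c hβ0 hβ1 hCd F hFu hFinv hIE
end

section
/- Let x_d : ℝ≥0 → ℝ^p satisfy ẋ_d(t) = -α F(t) φ(t) φ(t)ᵀ x_d(t) + α F(t) φ(t) d(t) where F is positive definite with d/dt[F⁻¹] = -β(t) F⁻¹ + α φ φᵀ and β(t) ≥ β_min > 0. Then W(t) := (1/2) x_d(t)ᵀ F⁻¹(t) x_d(t) satisfies Ẇ(t) ≤ -β(t) W(t) + (α/2) d²(t); consequently, if d is bounded then W (and hence x_d, if F is bounded) is bounded. -/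
/-!
Differentiating `W = ½ xᵀ F⁻¹ x` along the dynamics, the `F` in `ẋ` cancels against `F⁻¹`, and
with `s = φᵀ x` one gets `Ẇ = -β W + α d s - (α/2) s²`. Completing the square,
`α d s - (α/2) s² ≤ (α/2) d²`. Since `W ≥ 0` and `β ≥ β_min > 0`, a bound `|d| ≤ D` gives
`Ẇ ≤ -β_min W + (α/2) D²`, and Grönwall's inequality keeps `W` below
`max (W 0) (α D² / (2 β_min))`.
-/

open Matrix Set Filter

attribute [local instance] Matrix.normedAddCommGroup Matrix.normedSpace

section QuadraticForm

variable {ι : Type*} [Fintype ι]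

theorem HasDerivAt.dotProduct_mulVec {u v : ℝ → ι → ℝ} {A : ℝ → Matrix ι ι ℝ}
    {u' v' : ι → ℝ} {A' : Matrix ι ι ℝ} {t : ℝ}
    (hu : HasDerivAt u u' t) (hA : HasDerivAt A A' t) (hv : HasDerivAt v v' t) :
    HasDerivAt (fun s => u s ⬝ᵥ A s *ᵥ v s)
      (u' ⬝ᵥ A t *ᵥ v t + u t ⬝ᵥ A' *ᵥ v t + u t ⬝ᵥ A t *ᵥ v') t := by
  have hu_i (i : ι) : HasDerivAt (fun s => u s i) (u' i) t := hasDerivAt_pi.1 hu i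
  have hv_i (i : ι) : HasDerivAt (fun s => v s i) (v' i) t := hasDerivAt_pi.1 hv i
  have hA_ij (i j : ι) : HasDerivAt (fun s => A s i j) (A' i j) t :=
    hasDerivAt_pi.1 (hasDerivAt_pi.1 hA i) j
  have h : HasDerivAt (fun s => ∑ i, ∑ j, u s i * (A s i j * v s j))
      (∑ i, ∑ j, (u' i * (A t i j * v t j) + u t i * (A' i j * v t j + A t i j * v' j))) t :=
    .fun_sum fun i _ => .fun_sum fun j _ => (hu_i i).mul ((hA_ij i j).mul (hv_i j))
  convert h using 1
  · funext s
    simp only [dotProduct, mulVec, Finset.mul_sum]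
  · simp only [dotProduct, mulVec, Finset.mul_sum, ← Finset.sum_add_distrib]
    exact Finset.sum_congr rfl fun i _ => Finset.sum_congr rfl fun j _ => by ring

theorem Matrix.IsSymm.dotProduct_mulVec_comm {M : Matrix ι ι ℝ} (hM : M.IsSymm)
    (x y : ι → ℝ) :
    x ⬝ᵥ M *ᵥ y = y ⬝ᵥ M *ᵥ x := by
  rw [dotProduct_mulVec, ← mulVec_transpose, hM.eq, dotProduct_comm]

theorem Matrix.PosDef.dotProduct_mulVec_self_nonneg {M : Matrix ι ι ℝ}
    (hM : M.PosDef) (x : ι → ℝ) : 0 ≤ x ⬝ᵥ M *ᵥ x := by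
  simpa only [star_trivial] using hM.posSemidef.dotProduct_mulVec_nonneg x

theorem vecMulVec_self_mulVec (φ x : ι → ℝ) : vecMulVec φ φ *ᵥ x = (φ ⬝ᵥ x) • φ := by
  rw [vecMulVec_mulVec, op_smul_eq_smul]

/-- The quadratic form `xᵀ M x` differentiated along `ẋ = -α F φ φᵀ x + α d F φ` and
`Ṁ = -β M + α φ φᵀ`, where `M = F⁻¹`. -/
theorem lyapunov_derivative_eq [DecidableEq ι] {M F : Matrix ι ι ℝ} (hM : M.IsSymm)
    (hMF : M * F = 1) (x φ : ι → ℝ) (α β d : ℝ) :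
    let x' := -α • F *ᵥ (vecMulVec φ φ *ᵥ x) + (α * d) • F *ᵥ φ
    x' ⬝ᵥ M *ᵥ x + x ⬝ᵥ (-β • M + α • vecMulVec φ φ) *ᵥ x + x ⬝ᵥ M *ᵥ x' =
      -β * (x ⬝ᵥ M *ᵥ x) + 2 * α * d * (φ ⬝ᵥ x) - α * (φ ⬝ᵥ x) ^ 2 := by
  intro x'
  have hMx' : M *ᵥ x' = (α * d - α * (φ ⬝ᵥ x)) • φ := by
    simp only [x', mulVec_add, mulVec_smul, mulVec_mulVec, hMF, one_mulVec,
      vecMulVec_self_mulVec, smul_smul]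
    module
  rw [hM.dotProduct_mulVec_comm x', hMx', add_mulVec, smul_mulVec, smul_mulVec,
    vecMulVec_self_mulVec]
  simp only [dotProduct_add, dotProduct_smul, smul_eq_mul, dotProduct_comm x φ]
  ring

end QuadraticForm

theorem gronwallBound_le_max_of_neg {δ K ε x : ℝ} (hK : K < 0) (hx : 0 ≤ x) :
    gronwallBound δ K ε x ≤ max δ (-ε / K) := by
  rw [gronwallBound_of_K_ne_0 hK.ne]
  have he : Real.exp (K * x) ≤ 1 :=
    Real.exp_le_one_iff.2 (mul_nonpos_of_nonpos_of_nonneg hK.le hx)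
  have he' : 0 ≤ Real.exp (K * x) := (Real.exp_pos _).le
  calc δ * Real.exp (K * x) + ε / K * (Real.exp (K * x) - 1)
      = δ * Real.exp (K * x) + -ε / K * (1 - Real.exp (K * x)) := by ring
    _ ≤ max δ (-ε / K) * Real.exp (K * x) + max δ (-ε / K) * (1 - Real.exp (K * x)) :=
      add_le_add (mul_le_mul_of_nonneg_right (le_max_left _ _) he')
        (mul_le_mul_of_nonneg_right (le_max_right _ _) (sub_nonneg.2 he))
    _ = max δ (-ε / K) := by ring

theorem le_max_of_hasDerivAt_le_mul_add {f f' : ℝ → ℝ} {K ε a : ℝ} (hK : K < 0)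
    (hf : ∀ t ∈ Ici a, HasDerivAt f (f' t) t) (bound : ∀ t ∈ Ici a, f' t ≤ K * f t + ε) :
    ∀ t ∈ Ici a, f t ≤ max (f a) (-ε / K) := by
  intro t ht
  have hcont : ContinuousOn f (Icc a t) := fun s hs =>
    (hf s hs.1).continuousAt.continuousWithinAt
  have hgronwall := le_gronwallBound_of_liminf_deriv_right_le hcont
    (fun s hs r hr => by
      simpa only [slope_def_field, div_eq_inv_mul] using
        (hf s hs.1).hasDerivWithinAt.liminf_right_slope_le hr)
    le_rfl (fun s hs => bound s hs.1) t ⟨ht, le_rfl⟩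
  exact hgronwall.trans (gronwallBound_le_max_of_neg hK (sub_nonneg.2 ht))

theorem stmt16_general {p : ℕ} (F : ℝ → Matrix (Fin p) (Fin p) ℝ)
    (xd : ℝ → Fin p → ℝ) (φ : ℝ → Fin p → ℝ) (d β : ℝ → ℝ)
    (α βmin : ℝ) (hα : 0 < α) (hβmin : 0 < βmin)
    (hFpd : ∀ t, 0 ≤ t → (F t).PosDef)
    (hβ : ∀ t, 0 ≤ t → βmin ≤ β t)
    (hFinv : ∀ t, 0 ≤ t → HasDerivAt (fun s => (F s)⁻¹)
      (-(β t) • (F t)⁻¹ + α • vecMulVec (φ t) (φ t)) t)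
    (hxd : ∀ t, 0 ≤ t → HasDerivAt xd
      (-α • (F t).mulVec ((vecMulVec (φ t) (φ t)).mulVec (xd t)) +
        (α * d t) • (F t).mulVec (φ t)) t)
    (W : ℝ → ℝ)
    (hW : ∀ t, W t = (1 / 2) * (xd t ⬝ᵥ (F t)⁻¹.mulVec (xd t))) :
    (∀ t, 0 ≤ t → ∃ w' : ℝ, HasDerivAt W w' t ∧
      w' ≤ -(β t) * W t + (α / 2) * (d t) ^ 2) ∧
    ((∃ D : ℝ, ∀ t, 0 ≤ t → |d t| ≤ D) →
      ∃ B : ℝ, ∀ t, 0 ≤ t → W t ≤ B) := by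
  have hW_deriv (t : ℝ) (ht : 0 ≤ t) : HasDerivAt W
      (-(β t) * W t + α * d t * (φ t ⬝ᵥ xd t) - α / 2 * (φ t ⬝ᵥ xd t) ^ 2) t := by
    have hF := hFpd t ht
    have hMF : (F t)⁻¹ * F t = 1 := nonsing_inv_mul _ hF.det_pos.ne'.isUnit
    have h := ((hxd t ht).dotProduct_mulVec (hFinv t ht) (hxd t ht)).const_mul (1 / 2)
    rw [lyapunov_derivative_eq (isHermitian_iff_isSymm.1 hF.inv.isHermitian) hMF] at h
    refine (h.congr_of_eventuallyEq (.of_forall hW)).congr_deriv ?_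
    rw [hW]
    ring
  have hW_le (t : ℝ) (ht : 0 ≤ t) :
      -(β t) * W t + α * d t * (φ t ⬝ᵥ xd t) - α / 2 * (φ t ⬝ᵥ xd t) ^ 2 ≤
        -(β t) * W t + α / 2 * d t ^ 2 := by
    nlinarith [mul_nonneg hα.le (sq_nonneg (φ t ⬝ᵥ xd t - d t))]
  refine ⟨fun t ht => ⟨_, hW_deriv t ht, hW_le t ht⟩, fun ⟨D, hD⟩ => ?_⟩
  have hW_nonneg (t : ℝ) (ht : 0 ≤ t) : 0 ≤ W t := by
    rw [hW]
    exact mul_nonneg one_half_pos.le ((hFpd t ht).inv.dotProduct_mulVec_self_nonneg _)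
  refine ⟨_, le_max_of_hasDerivAt_le_mul_add (ε := α / 2 * D ^ 2) (neg_neg_of_pos hβmin)
    hW_deriv fun t ht => ?_⟩
  have hd2 : d t ^ 2 ≤ D ^ 2 := sq_le_sq' (abs_le.1 (hD t ht)).1 (abs_le.1 (hD t ht)).2
  nlinarith [hW_le t ht, hβ t ht, hW_nonneg t ht]

/-- BIBO-stability of the perturbed LS dynamics: `W = ½ x_dᵀ F⁻¹ x_d`
satisfies `Ẇ ≤ -β W + (α/2) d²`, hence `W` is bounded when `d` is bounded. -/
theorem stmt16 {p : ℕ} (F : ℝ → Matrix (Fin p) (Fin p) ℝ)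
    (xd : ℝ → Fin p → ℝ) (φ : ℝ → Fin p → ℝ) (d β : ℝ → ℝ)
    (α βmin : ℝ) (hα : 0 < α) (hβmin : 0 < βmin)
    (hφ : Continuous φ) (hd : Continuous d)
    (hFpd : ∀ t, 0 ≤ t → (F t).PosDef)
    (hβ : ∀ t, 0 ≤ t → βmin ≤ β t)
    (hFinv : ∀ t, 0 ≤ t → HasDerivAt (fun s => (F s)⁻¹)
      (-(β t) • (F t)⁻¹ + α • vecMulVec (φ t) (φ t)) t)
    (hxd : ∀ t, 0 ≤ t → HasDerivAt xd
      (-α • (F t).mulVec ((vecMulVec (φ t) (φ t)).mulVec (xd t)) +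
        (α * d t) • (F t).mulVec (φ t)) t)
    (W : ℝ → ℝ)
    (hW : ∀ t, W t = (1 / 2) * (xd t ⬝ᵥ (F t)⁻¹.mulVec (xd t))) :
    (∀ t, 0 ≤ t → ∃ w' : ℝ, HasDerivAt W w' t ∧
      w' ≤ -(β t) * W t + (α / 2) * (d t) ^ 2) ∧
    ((∃ D : ℝ, ∀ t, 0 ≤ t → |d t| ≤ D) →
      ∃ B : ℝ, ∀ t, 0 ≤ t → W t ≤ B) :=
  stmt16_general F xd φ d β α βmin hα hβmin hFpd hβ hFinv hxd W hW
end
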